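/- Fix c > 0 and define δ_c(x) = B_c(x) - R_c(x) on (0,c), where B_c(x) = Γ(x)Γ(c-x)/Γ(c) and R_c(x) = -ψ(x) - ψ(c-x) - 2γ. Then δ_c(x) tends to 0 as x → 0⁺. -/

import Mathlib

noncomputable def digamma (x : ℝ) : ℝ := deriv (fun y : ℝ => Real.log (Real.Gamma y)) x

noncomputable def Bc (c x : ℝ) : ℝ := Real.Gamma x * Real.Gamma (c - x) / Real.Gamma c

noncomputable def Rc (c x : ℝ) : ℝ :=
  -digamma x - digamma (c - x) - 2 * Real.eulerMascheroniConstant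

open Real Filter Set Topology

/-!
Put `f x = Γ (x + 1) Γ (c - x) / Γ c`. Since `Γ (x + 1) = x Γ x`, we have `B_c x = f x / x` with
`f 0 = 1`, so `B_c x - 1 / x` is the difference quotient of `f` at `0` and tends to
`f' 0 = -γ - ψ c`. Meanwhile `ψ x + 1 / x = ψ (x + 1) → ψ 1 = -γ` and `ψ (c - x) → ψ c`,
so `δ_c x = (B_c x - 1 / x) + (ψ x + 1 / x) + ψ (c - x) + 2γ → 0`.
-/

-- `Γ = 1 / (1 / Γ)` with `1 / Γ` entire.
theorem Complex.analyticAt_Gamma {s : ℂ} (hs : ∀ m : ℕ, s ≠ -m) :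
    AnalyticAt ℂ Complex.Gamma s := by
  have hinv : AnalyticAt ℂ (fun z => (Complex.Gamma z)⁻¹) s := by
    simpa only [one_div] using Complex.differentiable_one_div_Gamma.analyticAt s
  simpa only [Pi.inv_def, inv_inv] using hinv.inv (inv_ne_zero (Complex.Gamma_ne_zero hs))

theorem Real.analyticAt_Gamma {x : ℝ} (hx : ∀ m : ℕ, x ≠ -m) : AnalyticAt ℝ Gamma x := by
  have hx' : ∀ m : ℕ, (x : ℂ) ≠ -m := by exact_mod_cast hx
  have h : AnalyticAt ℝ (fun y : ℝ => (Complex.Gamma y).re) x :=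
    Complex.reCLM.analyticAt _ |>.comp <|
      (Complex.analyticAt_Gamma hx').restrictScalars.comp (Complex.ofRealCLM.analyticAt x)
  simpa only [Complex.Gamma_ofReal, Complex.ofReal_re] using h

theorem Real.eventually_ne_neg_nat {p : ℝ} (hp : ∀ m : ℕ, p ≠ -m) :
    ∀ᶠ y in 𝓝 p, ∀ m : ℕ, y ≠ -(m : ℝ) := by
  filter_upwards [(Real.analyticAt_Gamma hp).continuousAt.eventually_ne (Gamma_ne_zero hp)]
    with y hy m hym
  exact hy (hym ▸ Gamma_neg_nat_eq_zero m)

theorem digamma_eq_deriv_Gamma_div {x : ℝ} (hx : ∀ m : ℕ, x ≠ -m) :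
    digamma x = deriv Gamma x / Gamma x :=
  ((differentiableAt_Gamma hx).hasDerivAt.log (Gamma_ne_zero hx)).deriv

theorem digamma_one : digamma 1 = -eulerMascheroniConstant := by
  rw [digamma_eq_deriv_Gamma_div (fun m => by bound),
    hasDerivAt_Gamma_one.deriv, Gamma_one, div_one]

theorem continuousAt_digamma {p : ℝ} (hp : ∀ m : ℕ, p ≠ -m) : ContinuousAt digamma p := by
  have hΓ := Real.analyticAt_Gamma hp
  refine (hΓ.deriv.continuousAt.div hΓ.continuousAt (Gamma_ne_zero hp)).congr ?_
  filter_upwards [Real.eventually_ne_neg_nat hp] with y hy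
  exact (digamma_eq_deriv_Gamma_div hy).symm

-- Differentiate the logarithm of `Γ (y + 1) = y Γ y` at `x`.
theorem digamma_add_one {x : ℝ} (hx : ∀ m : ℕ, x ≠ -m) :
    digamma (x + 1) = digamma x + x⁻¹ := by
  have hlogΓ : DifferentiableAt ℝ (fun y => log (Gamma y)) x :=
    (differentiableAt_Gamma hx).log (Gamma_ne_zero hx)
  have hx0 : x ≠ 0 := by simpa using hx 0
  have hlog : (fun y => log (Gamma (y + 1))) =ᶠ[𝓝 x] fun y => log (Gamma y) + log y := by
    filter_upwards [Real.eventually_ne_neg_nat hx] with y hy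
    have hy0 : y ≠ 0 := by simpa using hy 0
    rw [Gamma_add_one hy0, log_mul hy0 (Gamma_ne_zero hy), add_comm]
  rw [digamma, ← deriv_comp_add_const, hlog.deriv_eq,
    deriv_fun_add hlogΓ (differentiableAt_log hx0), deriv_log, digamma]

theorem tendsto_digamma_add_inv_nhdsGT_zero :
    Tendsto (fun x => digamma x + x⁻¹) (𝓝[>] 0) (𝓝 (-eulerMascheroniConstant)) := by
  have hshift : Tendsto (fun x : ℝ => x + 1) (𝓝[>] 0) (𝓝 1) := by
    simpa using ((continuous_add_const (1 : ℝ)).tendsto 0).mono_left nhdsWithin_le_nhds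
  have hlim := (continuousAt_digamma (p := 1) fun m => by bound).tendsto.comp hshift
  rw [digamma_one] at hlim
  refine hlim.congr' ?_
  filter_upwards [self_mem_nhdsWithin] with x (hx : 0 < x)
  exact digamma_add_one fun m => by bound

theorem tendsto_Bc_sub_inv {c : ℝ} (hc : ∀ m : ℕ, c ≠ -m) :
    Tendsto (fun x => Bc c x - x⁻¹) (𝓝[≠] 0) (𝓝 (-eulerMascheroniConstant - digamma c)) := by
  have hΓc : Gamma c ≠ 0 := Gamma_ne_zero hc
  set f := fun x => Gamma (x + 1) * Gamma (c - x) / Gamma c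
  have hf : HasDerivAt f (-eulerMascheroniConstant - digamma c) 0 := by
    have h1 : HasDerivAt (fun x => Gamma (x + 1)) (-eulerMascheroniConstant) 0 :=
      HasDerivAt.comp_add_const 0 1 (by simpa using hasDerivAt_Gamma_one)
    have h2 : HasDerivAt (fun x => Gamma (c - x)) (-deriv Gamma c) 0 := by
      simpa using
        HasDerivAt.comp_const_sub c 0 (by simpa using (differentiableAt_Gamma hc).hasDerivAt)
    refine ((h1.mul h2).div_const (Gamma c)).congr_deriv ?_
    rw [digamma_eq_deriv_Gamma_div hc, zero_add, Gamma_one, sub_zero]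
    field_simp
    ring
  refine (hasDerivAt_iff_tendsto_slope.mp hf).congr' ?_
  filter_upwards [self_mem_nhdsWithin] with x (hx : x ≠ 0)
  simp only [slope_def_field, Gamma_add_one hx, zero_add, Gamma_one, sub_zero, one_mul, Bc, f]
  field_simp

theorem stmt_9 (c : ℝ) (hc : 0 < c) :
    Filter.Tendsto (fun x => Bc c x - Rc c x) (nhdsWithin 0 (Set.Ioi 0)) (nhds 0) := by
  have hc' : ∀ m : ℕ, c ≠ -m := fun m => by bound
  have hB := (tendsto_Bc_sub_inv hc').mono_left (nhdsGT_le_nhdsNE 0)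
  have hsub : Tendsto (fun x => c - x) (𝓝[>] 0) (𝓝 c) := by
    simpa using ((continuous_sub_left c).tendsto 0).mono_left nhdsWithin_le_nhds
  convert ((hB.add tendsto_digamma_add_inv_nhdsGT_zero).add
    ((continuousAt_digamma hc').tendsto.comp hsub)).add_const (2 * eulerMascheroniConstant)
    using 2
  · simp only [Rc, Function.comp_apply]
    ring
  · ring
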